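/- Let f be holomorphic on a neighborhood of the closed disk D(0, r₃) with f(0) = 1, let 0 < r₁ < r₂ < r₃, and let z₁, …, z_n be the zeros of f in D(0, r₂) counted with multiplicity. Then n ≤ (log(r₃/r₂))^{-1} · log max_{|z| = r₃} |f(z)|. -/

import Mathlib

open Complex ComplexConjugate Metric Finset

/-!
Multiplying `g` by the Blaschke-type factors `r² - conj aᵢ z` instead of the linear factors
`z - aᵢ` does not change the modulus on the circle `|z| = r` (up to `rⁿ`), but replaces the small
value `∏ |aᵢ|` at the centre by the large value `r²ⁿ`. The maximum modulus principle for `r = r₃`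
then gives `r₃ⁿ |g 0| ≤ M`, while `f 0 = 1` forces `|g 0| = 1 / ∏ |aᵢ| ≥ r₂⁻ⁿ` for zeros in
`D(0, r₂)`; hence `(r₃ / r₂)ⁿ ≤ M`.
-/

lemma norm_sq_sub_conj_mul_of_norm_eq {r : ℝ} {z : ℂ} (hz : ‖z‖ = r) (a : ℂ) :
    ‖(r : ℂ) ^ 2 - conj a * z‖ = r * ‖z - a‖ := by
  have hzz : z * conj z = (r : ℂ) ^ 2 := by
    rw [mul_conj, normSq_eq_norm_sq, hz]
    push_cast
    ring
  have hfactor : (r : ℂ) ^ 2 - conj a * z = z * conj (z - a) := by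
    rw [map_sub, mul_sub, hzz]
    ring
  rw [hfactor, norm_mul, norm_conj, hz]

lemma pow_card_mul_norm_le_of_norm_prod_mul_le {ι : Type*} {g : ℂ → ℂ} {r M : ℝ} (hr : 0 < r)
    (hg : DiffContOnCl ℂ g (ball 0 r)) (s : Finset ι) (a : ι → ℂ)
    (hM : ∀ z : ℂ, ‖z‖ = r → ‖(∏ i ∈ s, (z - a i)) * g z‖ ≤ M) :
    r ^ s.card * ‖g 0‖ ≤ M := by
  set F : ℂ → ℂ := fun z => (∏ i ∈ s, ((r : ℂ) ^ 2 - conj (a i) * z)) * g z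
  have hP : Differentiable ℂ fun z => ∏ i ∈ s, ((r : ℂ) ^ 2 - conj (a i) * z) := by fun_prop
  have hF : DiffContOnCl ℂ F (ball 0 r) := hP.diffContOnCl.smul hg
  have hF_sphere : ∀ z ∈ frontier (ball (0 : ℂ) r), ‖F z‖ ≤ r ^ s.card * M := by
    intro z hz
    rw [frontier_ball _ hr.ne', mem_sphere_zero_iff_norm] at hz
    calc ‖F z‖ = r ^ s.card * ‖(∏ i ∈ s, (z - a i)) * g z‖ := by
          simp only [F, norm_mul, norm_prod, norm_sq_sub_conj_mul_of_norm_eq hz, prod_mul_distrib,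
            prod_const]
          ring
      _ ≤ r ^ s.card * M := by gcongr; exact hM z hz
  have hF_zero : ‖F 0‖ = r ^ s.card * (r ^ s.card * ‖g 0‖) := by
    simp only [F, mul_zero, sub_zero, norm_mul, norm_pow, norm_real, Real.norm_eq_abs,
      abs_of_pos hr, prod_const]
    ring
  have hmax : ‖F 0‖ ≤ r ^ s.card * M :=
    norm_le_of_forall_mem_frontier_norm_le isBounded_ball hF hF_sphere
      (subset_closure (mem_ball_self hr))
  rw [hF_zero] at hmax
  exact le_of_mul_le_mul_left hmax (by positivity)

lemma one_le_pow_card_mul_norm_of_prod_mul_eq_one {ι : Type*} (s : Finset ι) {a : ι → ℂ}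
    {c : ℂ} {R : ℝ} (ha : ∀ i ∈ s, ‖a i‖ ≤ R) (h : (∏ i ∈ s, (0 - a i)) * c = 1) :
    1 ≤ R ^ s.card * ‖c‖ := by
  have hnorm : (∏ i ∈ s, ‖a i‖) * ‖c‖ = 1 := by
    simpa [norm_prod] using congrArg norm h
  rw [← hnorm, ← prod_const]
  gcongr with i hi
  exact ha i hi

theorem stmt9_general (f g : ℂ → ℂ) (r₁ r₂ r₃ M : ℝ) (n : ℕ) (zs : Fin n → ℂ)
    (h1 : 0 < r₁) (h12 : r₁ < r₂) (h23 : r₂ < r₃)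
    (hf : ∃ U : Set ℂ, IsOpen U ∧ Metric.closedBall 0 r₃ ⊆ U ∧
      DifferentiableOn ℂ f U ∧ DifferentiableOn ℂ g U)
    (hzs : ∀ i, zs i ∈ Metric.ball (0 : ℂ) r₂)
    (hfac : ∀ z ∈ Metric.closedBall (0 : ℂ) r₃,
      f z = (∏ i : Fin n, (z - zs i)) * g z)
    (hf0 : f 0 = 1)
    (hM : ∀ z : ℂ, ‖z‖ = r₃ → ‖f z‖ ≤ M) :
    (n : ℝ) ≤ (Real.log (r₃ / r₂))⁻¹ * Real.log M := by
  obtain ⟨U, -, hU, -, hg⟩ := hf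
  have hr₂ : 0 < r₂ := h1.trans h12
  have hr₃ : 0 < r₃ := hr₂.trans h23
  have hg_disk : DiffContOnCl ℂ g (ball 0 r₃) :=
    (hg.mono (closure_ball (0 : ℂ) hr₃.ne' ▸ hU)).diffContOnCl
  have hjensen : r₃ ^ n * ‖g 0‖ ≤ M := by
    simpa using pow_card_mul_norm_le_of_norm_prod_mul_le hr₃ hg_disk univ zs fun z hz =>
      hfac z (mem_closedBall_zero_iff.2 hz.le) ▸ hM z hz
  have hg0 : 1 ≤ r₂ ^ n * ‖g 0‖ := by
    simpa using one_le_pow_card_mul_norm_of_prod_mul_eq_one univ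
      (fun i _ => (mem_ball_zero_iff.1 (hzs i)).le)
      ((hfac 0 (mem_closedBall_self hr₃.le)).symm.trans hf0)
  have hpow : (r₃ / r₂) ^ n ≤ M := by
    rw [div_pow, div_le_iff₀' (by positivity)]
    calc r₃ ^ n ≤ r₃ ^ n * (r₂ ^ n * ‖g 0‖) := le_mul_of_one_le_right (by positivity) hg0
      _ = r₂ ^ n * (r₃ ^ n * ‖g 0‖) := by ring
      _ ≤ r₂ ^ n * M := by gcongr
  have hlog_pos : 0 < Real.log (r₃ / r₂) := Real.log_pos ((one_lt_div hr₂).2 h23)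
  rw [inv_mul_eq_div, le_div_iff₀ hlog_pos, ← Real.log_pow]
  exact Real.log_le_log (by positivity) hpow

/-- Jensen zero-counting bound. If `f` is holomorphic near the closed
disk of radius `r₃`, `f 0 = 1`, and `z₁,…,z_n` are the zeros of `f` in `D(0,r₂)`
counted with multiplicity (encoded by the factorization `f = ∏ (· - zs i) * g`
with `g` holomorphic and nonvanishing on the closed disk of radius `r₂`), then
`n ≤ (log(r₃/r₂))⁻¹ log max_{|z|=r₃} |f|`. -/
theorem stmt9 (f g : ℂ → ℂ) (r₁ r₂ r₃ M : ℝ) (n : ℕ) (zs : Fin n → ℂ)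
    (h1 : 0 < r₁) (h12 : r₁ < r₂) (h23 : r₂ < r₃)
    (hf : ∃ U : Set ℂ, IsOpen U ∧ Metric.closedBall 0 r₃ ⊆ U ∧
      DifferentiableOn ℂ f U ∧ DifferentiableOn ℂ g U)
    (hzs : ∀ i, zs i ∈ Metric.ball (0 : ℂ) r₂)
    (hfac : ∀ z ∈ Metric.closedBall (0 : ℂ) r₃,
      f z = (∏ i : Fin n, (z - zs i)) * g z)
    (hg : ∀ z ∈ Metric.closedBall (0 : ℂ) r₂, g z ≠ 0)
    (hf0 : f 0 = 1)
    (hM : ∀ z : ℂ, ‖z‖ = r₃ → ‖f z‖ ≤ M) :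
    (n : ℝ) ≤ (Real.log (r₃ / r₂))⁻¹ * Real.log M :=
  stmt9_general f g r₁ r₂ r₃ M n zs h1 h12 h23 hf hzs hfac hf0 hM
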